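/- The Mellin transform of the absolute value of the characteristic polynomial of a Haar-random n × n unitary matrix gives cumulants Γ_j(β) of Re log Z equal to ((2^(j−1) − 1)/2^(j−1)) Σ_{k=0}^{n−1} ψ^(j−1)(1 + kβ/2), for the circular β-ensemble with β ∈ {1, 2, 4}. In particular, for β = 2 and j ≥ 3, |Γ_j| ≤ ((2^(j−1)−1)/2^(j−1)) · (2 + Σ_{k≥1}((j−2)!/k^(j−1) + (j−1)!/k^j)) ≤ j! · (2π²/3). -/

import Mathlib

open MeasureTheory ProbabilityTheory

/-- The `j`-th cumulant of a real random variable `X`, defined as the `j`-th derivative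
at `0` of the cumulant generating function `t ↦ log E[exp (t X)]`. -/
noncomputable def cumulant {Ω : Type*} [MeasurableSpace Ω] (X : Ω → ℝ) (μ : Measure Ω)
    (j : ℕ) : ℝ :=
  iteratedDeriv j (fun t => cgf X μ t) 0

/-- The polygamma function of order `j`: the `(j+1)`-st derivative of `log ∘ Γ`. -/
noncomputable def polygamma (j : ℕ) (z : ℝ) : ℝ :=
  iteratedDeriv (j + 1) (fun x => Real.log (Real.Gamma x)) z

/-!
Differentiating Selberg's formula `j` times at `s = 0` turns each factor
`log Γ(a + s) - 2 log Γ(a + s/2)` into `(1 - 2^(1-j)) ψ^(j-1)(a)`.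

For the bound, Gauss's limit `log Γ(x) = lim (x log N + log N! - ∑_{i ≤ N} log (x + i))` may be
differentiated termwise, since the derivatives converge locally uniformly. This gives
`ψ^(m)(z) = (-1)^(m+1) m! ∑_{i ≥ 0} (z + i)^(-(m+1))` for `m ≥ 1`, and telescoping bounds the
series by `z^(-(m+1)) + z^(-m) / m`.
-/

open Real Filter Set Topology
open scoped ContDiff Nat

lemma iteratedDeriv_succ_eq_of_hasDerivAt {𝕜 F : Type*} [NontriviallyNormedField 𝕜]
    [NormedAddCommGroup F] [NormedSpace 𝕜 F] {f g : 𝕜 → F} {s : Set 𝕜} (hs : IsOpen s)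
    (hfg : ∀ x ∈ s, HasDerivAt f (g x) x) (n : ℕ) {x : 𝕜} (hx : x ∈ s) :
    iteratedDeriv (n + 1) f x = iteratedDeriv n g x := by
  rw [iteratedDeriv_succ']
  exact Filter.EventuallyEq.iteratedDeriv_eq n
    (eventually_of_mem (hs.mem_nhds hx) fun y hy => (hfg y hy).deriv)

lemma iteratedDeriv_comp_const_mul_of_contDiffOn {𝕜 F : Type*} [NontriviallyNormedField 𝕜]
    [NormedAddCommGroup F] [NormedSpace 𝕜 F] {f : 𝕜 → F} {s : Set 𝕜} (hs : IsOpen s)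
    (hf : ContDiffOn 𝕜 ∞ f s) (c : 𝕜) (n : ℕ) {x : 𝕜} (hx : c * x ∈ s) :
    iteratedDeriv n (fun y => f (c * y)) x = c ^ n • iteratedDeriv n f (c * x) := by
  induction n generalizing x with
  | zero => simp
  | succ n ih =>
    have hev : iteratedDeriv n (fun y => f (c * y)) =ᶠ[𝓝 x]
        fun y => c ^ n • iteratedDeriv n f (c * y) :=
      eventually_of_mem ((hs.preimage (continuous_const_mul c)).mem_nhds hx) fun y hy => ih hy
    have hdiff : DifferentiableAt 𝕜 (iteratedDeriv n f) (c * x) :=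
      ((hf.differentiableOn_iteratedDerivWithin (by exact_mod_cast ENat.natCast_lt_top n)
        hs.uniqueDiffOn).congr (iteratedDerivWithin_of_isOpen hs).symm).differentiableAt
        (hs.mem_nhds hx)
    have hchain :=
      (hdiff.hasDerivAt.scomp x ((hasDerivAt_id' x).const_mul c)).fun_const_smul (c ^ n)
    rw [iteratedDeriv_succ, hev.deriv_eq, iteratedDeriv_succ]
    simp only [Function.comp_def, mul_one] at hchain
    rw [hchain.deriv, smul_smul, pow_succ]

lemma pow_mul_add_le_add_one_pow {a : ℝ} (ha : 0 ≤ a) (n : ℕ) :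
    a ^ n * (a + (n + 1)) ≤ (a + 1) ^ (n + 1) := by
  induction n with
  | zero => simp
  | succ n ih =>
    push_cast
    calc a ^ (n + 1) * (a + (n + 1 + 1))
        ≤ a ^ (n + 1) * (a + (n + 1 + 1)) + a ^ n * (n + 1) :=
          le_add_of_nonneg_right (by positivity)
      _ = (a + 1) * (a ^ n * (a + (n + 1))) := by ring
      _ ≤ (a + 1) * (a + 1) ^ (n + 1) := by gcongr
      _ = (a + 1) ^ (n + 1 + 1) := by ring

lemma inv_add_one_pow_le_sub {a : ℝ} (ha : 0 < a) (m : ℕ) :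
    ((a + 1) ^ (m + 2))⁻¹ ≤
      (((m : ℝ) + 1) * a ^ (m + 1))⁻¹ - (((m : ℝ) + 1) * (a + 1) ^ (m + 1))⁻¹ := by
  have key := pow_mul_add_le_add_one_pow ha.le (m + 1)
  push_cast at key
  rw [← sub_nonneg]
  have hsplit : (((m : ℝ) + 1) * a ^ (m + 1))⁻¹ - (((m : ℝ) + 1) * (a + 1) ^ (m + 1))⁻¹ -
      ((a + 1) ^ (m + 2))⁻¹ =
      ((a + 1) ^ (m + 2) - a ^ (m + 1) * (a + (m + 1 + 1))) /
        (((m : ℝ) + 1) * a ^ (m + 1) * (a + 1) ^ (m + 2)) := by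
    field_simp
    ring
  rw [hsplit]
  exact div_nonneg (sub_nonneg.2 key) (by positivity)

noncomputable def hurwitzSum (q : ℕ) (z : ℝ) : ℝ := ∑' i : ℕ, ((z + i) ^ q)⁻¹

lemma sum_range_inv_add_pow_le {z : ℝ} (hz : 0 < z) (m N : ℕ) :
    ∑ i ∈ Finset.range N, ((z + i) ^ (m + 2))⁻¹ ≤
      (z ^ (m + 2))⁻¹ + (((m : ℝ) + 1) * z ^ (m + 1))⁻¹ := by
  have htail : ∀ N : ℕ, ∑ i ∈ Finset.range (N + 1), ((z + i) ^ (m + 2))⁻¹ +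
      (((m : ℝ) + 1) * (z + N) ^ (m + 1))⁻¹ ≤
        (z ^ (m + 2))⁻¹ + (((m : ℝ) + 1) * z ^ (m + 1))⁻¹ := by
    intro N
    induction N with
    | zero => simp
    | succ N ih =>
      have := inv_add_one_pow_le_sub (by positivity : 0 < z + N) m
      rw [add_assoc] at this
      rw [Finset.sum_range_succ]
      push_cast at this ⊢
      linarith
  cases N with
  | zero => rw [Finset.sum_range_zero]; positivity
  | succ N => exact (le_add_of_nonneg_right (by positivity)).trans (htail N)

lemma summable_inv_add_pow {z : ℝ} (hz : 0 < z) {q : ℕ} (hq : 2 ≤ q) :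
    Summable fun i : ℕ => ((z + i) ^ q)⁻¹ := by
  obtain ⟨m, rfl⟩ := Nat.exists_eq_add_of_le' hq
  exact summable_of_sum_range_le (fun i => by positivity) (sum_range_inv_add_pow_le hz m)

lemma hurwitzSum_le {z : ℝ} (hz : 0 < z) (m : ℕ) :
    hurwitzSum (m + 2) z ≤ (z ^ (m + 2))⁻¹ + (((m : ℝ) + 1) * z ^ (m + 1))⁻¹ :=
  Real.tsum_le_of_sum_range_le (fun i => by positivity) (sum_range_inv_add_pow_le hz m)

lemma hurwitzSum_one_le_two {q : ℕ} (hq : 2 ≤ q) : hurwitzSum q 1 ≤ 2 := by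
  obtain ⟨m, rfl⟩ := Nat.exists_eq_add_of_le' hq
  have hm : ((m : ℝ) + 1)⁻¹ ≤ 1 := inv_le_one_of_one_le₀ (by linarith [m.cast_nonneg (α := ℝ)])
  calc hurwitzSum (m + 2) 1 ≤ 1 + ((m : ℝ) + 1)⁻¹ := by simpa using hurwitzSum_le one_pos m
    _ ≤ 2 := by linarith

lemma hurwitzSum_nonneg (q : ℕ) {z : ℝ} (hz : 0 ≤ z) : 0 ≤ hurwitzSum q z :=
  tsum_nonneg fun i => by positivity

lemma hurwitzSum_eq_inv_pow_add {q : ℕ} (hq : 2 ≤ q) {z : ℝ} (hz : 0 < z) :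
    hurwitzSum q z = (z ^ q)⁻¹ + hurwitzSum q (z + 1) := by
  rw [hurwitzSum, (summable_inv_add_pow hz hq).tsum_eq_zero_add, hurwitzSum]
  simp only [Nat.cast_zero, add_zero, Nat.cast_add, Nat.cast_one, add_assoc, add_comm (1 : ℝ)]

lemma hasDerivAt_inv_add_pow (q : ℕ) {y c : ℝ} (hy : 0 < y + c) :
    HasDerivAt (fun y => ((y + c) ^ q)⁻¹) (-(q : ℝ) * ((y + c) ^ (q + 1))⁻¹) y := by
  have := (((hasDerivAt_id' y).add_const c).fun_pow q).fun_inv (by positivity)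
  refine this.congr_deriv ?_
  rcases q with _ | q
  · simp
  · rw [Nat.add_sub_cancel]
    field_simp
    ring

lemma hasDerivAt_hurwitzSum {q : ℕ} (hq : 2 ≤ q) {z : ℝ} (hz : 0 < z) :
    HasDerivAt (hurwitzSum q) (-(q : ℝ) * hurwitzSum (q + 1) z) z := by
  have hderiv : ∀ (i : ℕ) (y : ℝ), y ∈ Ioi (z / 2) →
      HasDerivAt (fun y : ℝ => ((y + i) ^ q)⁻¹) (-(q : ℝ) * ((y + i) ^ (q + 1))⁻¹) y :=
    fun i y hy => hasDerivAt_inv_add_pow q (by have : 0 < y := (half_pos hz).trans hy; positivity)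
  have hbound : ∀ (i : ℕ) (y : ℝ), y ∈ Ioi (z / 2) →
      ‖-(q : ℝ) * ((y + i) ^ (q + 1))⁻¹‖ ≤ (q : ℝ) * ((z / 2 + i) ^ (q + 1))⁻¹ := by
    intro i y hy
    have hy0 : 0 < y := (half_pos hz).trans hy
    have hy' : z / 2 + i ≤ y + i := by linarith [mem_Ioi.1 hy]
    rw [norm_mul, norm_neg, Real.norm_natCast, norm_inv, norm_pow,
      Real.norm_of_nonneg (by positivity)]
    gcongr
  have hseries := hasDerivAt_tsum_of_isPreconnected
    ((summable_inv_add_pow (half_pos hz) (by omega)).mul_left (q : ℝ)) isOpen_Ioi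
    isPreconnected_Ioi hderiv hbound (half_lt_self hz) (summable_inv_add_pow hz hq)
    (half_lt_self hz)
  unfold hurwitzSum
  rw [← tsum_mul_left]
  exact hseries

lemma iteratedDeriv_hurwitzSum {q : ℕ} (hq : 2 ≤ q) (m : ℕ) {z : ℝ} (hz : 0 < z) :
    iteratedDeriv m (hurwitzSum q) z = (-1) ^ m * q.ascFactorial m * hurwitzSum (q + m) z := by
  induction m generalizing z with
  | zero => simp
  | succ m ih =>
    have hev : iteratedDeriv m (hurwitzSum q) =ᶠ[𝓝 z]
        fun y => (-1) ^ m * q.ascFactorial m * hurwitzSum (q + m) y :=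
      eventually_of_mem (isOpen_Ioi.mem_nhds hz) fun y hy => ih hy
    rw [iteratedDeriv_succ, hev.deriv_eq, ((hasDerivAt_hurwitzSum (by omega) hz).const_mul _).deriv,
      Nat.ascFactorial_succ, ← add_assoc]
    push_cast
    ring

lemma contDiffOn_log_Gamma : ContDiffOn ℝ ∞ (fun x => log (Gamma x)) (Ioi 0) := by
  have hopen : IsOpen {z : ℂ | 0 < z.re} := isOpen_lt continuous_const Complex.continuous_re
  have hC : ContDiffOn ℂ ∞ Complex.Gamma {z : ℂ | 0 < z.re} := by
    refine DifferentiableOn.contDiffOn (fun z hz => ?_) hopen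
    refine (Complex.differentiableAt_Gamma z fun m hm => ?_).differentiableWithinAt
    have : 0 < z.re := hz
    simp [hm] at this
    linarith [m.cast_nonneg (α := ℝ)]
  intro x hx
  have hG : ContDiffAt ℝ ∞ Gamma x :=
    (hC.contDiffAt (hopen.mem_nhds (by simpa using hx))).real_of_complex
  exact (hG.log (Gamma_pos_of_pos hx).ne').contDiffWithinAt

noncomputable def digammaSeries (x : ℝ) : ℝ :=
  -eulerMascheroniConstant - x⁻¹ + ∑' i : ℕ, ((1 + i : ℝ)⁻¹ - (x + 1 + i)⁻¹)

lemma abs_inv_sub_inv_add_le {y : ℝ} (hy : 0 ≤ y) (i : ℕ) :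
    |(1 + i : ℝ)⁻¹ - (y + 1 + i)⁻¹| ≤ y * ((1 + i : ℝ) ^ 2)⁻¹ := by
  have hi : (0 : ℝ) < 1 + i := by positivity
  have hdiff : (1 + i : ℝ)⁻¹ - (y + 1 + i)⁻¹ = y * ((1 + i) * (y + 1 + i))⁻¹ := by
    field_simp
    ring
  rw [hdiff, abs_of_nonneg (by positivity)]
  gcongr
  rw [sq]
  gcongr
  linarith

lemma hasDerivAt_logGammaSeq (N : ℕ) {y : ℝ} (hy : 0 < y) :
    HasDerivAt (fun x => BohrMollerup.logGammaSeq x N)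
      (log N - ∑ i ∈ Finset.range (N + 1), (y + i)⁻¹) y := by
  have hsum : HasDerivAt (fun x => ∑ i ∈ Finset.range (N + 1), log (x + i))
      (∑ i ∈ Finset.range (N + 1), (y + i)⁻¹) y :=
    HasDerivAt.fun_sum fun i _ => by
      simpa using ((hasDerivAt_id' y).add_const (i : ℝ)).log (by positivity)
  exact ((hasDerivAt_mul_const (log N)).add_const _).sub hsum

lemma log_sub_sum_inv_eq (N : ℕ) (y : ℝ) :
    log N - ∑ i ∈ Finset.range (N + 1), (y + i)⁻¹ =
      (log N - harmonic N) + (-y⁻¹ + ∑ i ∈ Finset.range N, ((1 + i : ℝ)⁻¹ - (y + 1 + i)⁻¹)) := by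
  rw [Finset.sum_range_succ', Finset.sum_sub_distrib, harmonic]
  push_cast
  simp only [add_zero, add_comm (1 : ℝ), add_assoc]
  ring

lemma tendstoUniformlyOn_log_sub_sum_inv (R : ℝ) :
    TendstoUniformlyOn (fun (N : ℕ) (y : ℝ) => log N - ∑ i ∈ Finset.range (N + 1), (y + i)⁻¹)
      digammaSeries atTop (Ioo 0 R) := by
  have hγ : Tendsto (fun N : ℕ => log N - harmonic N) atTop (𝓝 (-eulerMascheroniConstant)) := by
    simpa using tendsto_harmonic_sub_log.neg
  have hinv : TendstoUniformlyOn (fun (_ : ℕ) (y : ℝ) => -y⁻¹) (fun y => -y⁻¹) atTop (Ioo 0 R) :=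
    fun _ hu => .of_forall fun _ _ _ => refl_mem_uniformity hu
  have hseries := tendstoUniformlyOn_tsum_nat ((summable_inv_add_pow one_pos le_rfl).mul_left R)
    (f := fun (i : ℕ) (y : ℝ) => (1 + i : ℝ)⁻¹ - (y + 1 + i)⁻¹) (s := Ioo 0 R)
    fun i y hy => (abs_inv_sub_inv_add_le hy.1.le i).trans (by gcongr; exact hy.2.le)
  refine (((hγ.tendstoUniformlyOn_const _).fun_add (hinv.fun_add hseries)).congr
    (.of_forall fun N y _ => (log_sub_sum_inv_eq N y).symm)).congr_right fun y _ => ?_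
  simp only [digammaSeries]
  ring

lemma hasDerivAt_log_Gamma {x : ℝ} (hx : 0 < x) :
    HasDerivAt (fun x => log (Gamma x)) (digammaSeries x) x :=
  hasDerivAt_of_tendstoUniformlyOn isOpen_Ioo (tendstoUniformlyOn_log_sub_sum_inv (x + 1))
    (.of_forall fun N _ hy => hasDerivAt_logGammaSeq N hy.1)
    (fun _ hy => BohrMollerup.tendsto_log_gamma hy.1) ⟨hx, by linarith⟩

lemma hasDerivAt_digammaSeries {x : ℝ} (hx : 0 < x) :
    HasDerivAt digammaSeries (hurwitzSum 2 x) x := by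
  have hderiv : ∀ (i : ℕ) (y : ℝ), y ∈ Ioi 0 →
      HasDerivAt (fun y : ℝ => (1 + i : ℝ)⁻¹ - (y + 1 + i)⁻¹) ((y + 1 + i) ^ 2)⁻¹ y := by
    intro i y hy
    have hy0 : 0 < y := hy
    refine ((((hasDerivAt_id' y).add_const 1).add_const (i : ℝ)).fun_inv
      (by positivity)).const_sub _ |>.congr_deriv ?_
    rw [neg_div, neg_neg, one_div]
  have hbound : ∀ (i : ℕ) (y : ℝ), y ∈ Ioi 0 → ‖((y + 1 + i) ^ 2)⁻¹‖ ≤ ((1 + i : ℝ) ^ 2)⁻¹ := by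
    intro i y hy
    have hy0 : 0 < y := hy
    rw [Real.norm_of_nonneg (by positivity)]
    gcongr
    linarith
  have hsummable : Summable fun i : ℕ => (1 + i : ℝ)⁻¹ - (x + 1 + i)⁻¹ :=
    .of_norm_bounded ((summable_inv_add_pow one_pos le_rfl).mul_left x)
      fun i => abs_inv_sub_inv_add_le hx.le i
  have hseries := hasDerivAt_tsum_of_isPreconnected (summable_inv_add_pow one_pos le_rfl)
    isOpen_Ioi isPreconnected_Ioi hderiv hbound hx hsummable hx
  rw [hurwitzSum_eq_inv_pow_add le_rfl hx]
  refine (((hasDerivAt_inv hx.ne').const_sub (-eulerMascheroniConstant)).add hseries).congr_deriv ?_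
  rw [hurwitzSum, neg_neg]

lemma polygamma_eq_hurwitzSum (m : ℕ) {z : ℝ} (hz : 0 < z) :
    polygamma (m + 1) z = (-1) ^ m * (m + 1)! * hurwitzSum (m + 2) z := by
  have hfac : ((2 : ℕ).ascFactorial m : ℝ) = (m + 1)! := by
    have := Nat.factorial_mul_ascFactorial 1 m
    norm_num [add_comm 1 m] at this
    exact_mod_cast this
  rw [polygamma,
    iteratedDeriv_succ_eq_of_hasDerivAt isOpen_Ioi (fun _ => hasDerivAt_log_Gamma) _ hz,
    iteratedDeriv_succ_eq_of_hasDerivAt isOpen_Ioi (fun _ => hasDerivAt_digammaSeries) _ hz,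
    iteratedDeriv_hurwitzSum le_rfl m hz, hfac, add_comm 2 m]

lemma abs_polygamma_le (m : ℕ) {z : ℝ} (hz : 0 < z) :
    |polygamma (m + 1) z| ≤ m ! / z ^ (m + 1) + (m + 1)! / z ^ (m + 2) := by
  rw [polygamma_eq_hurwitzSum m hz, abs_mul, abs_mul, abs_pow, abs_neg, abs_one, one_pow, one_mul,
    Nat.abs_cast, abs_of_nonneg (hurwitzSum_nonneg _ hz.le)]
  calc ((m + 1)! : ℝ) * hurwitzSum (m + 2) z
      ≤ (m + 1)! * ((z ^ (m + 2))⁻¹ + (((m : ℝ) + 1) * z ^ (m + 1))⁻¹) := by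
        gcongr
        exact hurwitzSum_le hz m
    _ = m ! / z ^ (m + 1) + (m + 1)! / z ^ (m + 2) := by
        rw [Nat.factorial_succ]
        push_cast
        field_simp
        ring

lemma iteratedDeriv_sum_log_Gamma_add {ι : Type*} (t : Finset ι) {a : ι → ℝ}
    (ha : ∀ k ∈ t, 0 < a k) {j : ℕ} (hj : j ≠ 0) :
    iteratedDeriv j (fun u => ∑ k ∈ t, log (Gamma (a k + u))) 0 =
      ∑ k ∈ t, polygamma (j - 1) (a k) := by
  rw [iteratedDeriv_fun_sum fun k hk => ?_]
  · refine Finset.sum_congr rfl fun k _ => ?_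
    have hshift := congrFun (iteratedDeriv_comp_const_add j (fun x => log (Gamma x)) (a k)) 0
    rw [hshift, add_zero, polygamma, Nat.sub_add_cancel (Nat.one_le_iff_ne_zero.2 hj)]
  · have hk : a k + 0 ∈ Ioi 0 := show 0 < a k + 0 by linarith [ha k hk]
    exact ((contDiffOn_log_Gamma.contDiffAt (isOpen_Ioi.mem_nhds hk)).comp 0
      (contDiffAt_const.add contDiffAt_id)).of_le (by exact_mod_cast le_top)

/-- `log ⟨|Z|^s⟩_β`, as given by Selberg's formula. -/
noncomputable def logCircularMoment (n : ℕ) (β s : ℝ) : ℝ :=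
  ∑ k ∈ Finset.range n, (Real.log (Real.Gamma (1 + k * β / 2)) +
    Real.log (Real.Gamma (1 + s + k * β / 2)) - 2 * Real.log (Real.Gamma (1 + s / 2 + k * β / 2)))

lemma iteratedDeriv_logCircularMoment (n : ℕ) {β : ℝ} (hβ : 0 ≤ β) {j : ℕ} (hj : j ≠ 0) :
    iteratedDeriv j (logCircularMoment n β) 0 =
      ((2 : ℝ) ^ (j - 1) - 1) / 2 ^ (j - 1) *
        ∑ k ∈ Finset.range n, polygamma (j - 1) (1 + k * β / 2) := by
  set a : ℕ → ℝ := fun k => 1 + k * β / 2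
  have ha : ∀ k, 1 ≤ a k := fun k => le_add_of_nonneg_right (by positivity)
  set g : ℝ → ℝ := fun u => ∑ k ∈ Finset.range n, log (Gamma (a k + u))
  have hg : ContDiffOn ℝ ∞ g (Ioi (-1)) :=
    ContDiffOn.sum fun k _ => contDiffOn_log_Gamma.comp (contDiffOn_const.add contDiffOn_id)
      fun u hu => show 0 < a k + u by linarith [ha k, mem_Ioi.1 hu]
  have hg0 : ContDiffAt ℝ ∞ g 0 := hg.contDiffAt (isOpen_Ioi.mem_nhds (by norm_num))
  have hmoment : logCircularMoment n β =
      fun s => ∑ k ∈ Finset.range n, log (Gamma (a k)) + (g s - 2 * g (2⁻¹ * s)) := by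
    funext s
    simp only [logCircularMoment, g, Finset.mul_sum, ← Finset.sum_sub_distrib,
      ← Finset.sum_add_distrib]
    refine Finset.sum_congr rfl fun k _ => ?_
    simp only [a]
    ring_nf
  have hhalf : iteratedDeriv j (fun s => g (2⁻¹ * s)) 0 = (2 ^ j)⁻¹ * iteratedDeriv j g 0 := by
    rw [iteratedDeriv_comp_const_mul_of_contDiffOn isOpen_Ioi hg _ _ (by norm_num), mul_zero,
      smul_eq_mul, inv_pow]
  have hsum : iteratedDeriv j g 0 = ∑ k ∈ Finset.range n, polygamma (j - 1) (a k) :=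
    iteratedDeriv_sum_log_Gamma_add _ (fun k _ => by linarith [ha k]) hj
  have hle : (j : WithTop ℕ∞) ≤ ∞ := by exact_mod_cast le_top
  have hghalf : ContDiffAt ℝ ∞ (fun s => 2 * g (2⁻¹ * s)) 0 := contDiffAt_const.mul <|
    (hg.contDiffAt (isOpen_Ioi.mem_nhds (show 2⁻¹ * (0 : ℝ) ∈ Ioi (-1) by norm_num))).comp 0
      (contDiffAt_const.mul contDiffAt_id)
  rw [hmoment, iteratedDeriv_const_add (Nat.pos_of_ne_zero hj),
    iteratedDeriv_fun_sub (hg0.of_le hle) (hghalf.of_le hle), iteratedDeriv_const_mul_field, hhalf,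
    hsum]
  obtain ⟨i, rfl⟩ := Nat.exists_eq_add_one.2 (Nat.pos_of_ne_zero hj)
  change _ = _ * ∑ k ∈ Finset.range n, polygamma (i + 1 - 1) (a k)
  generalize ∑ k ∈ Finset.range n, polygamma (i + 1 - 1) (a k) = S
  rw [Nat.add_sub_cancel, pow_succ]
  field_simp

lemma summable_div_nat_succ_pow (c : ℝ) {q : ℕ} (hq : 2 ≤ q) :
    Summable fun k : ℕ => c / ((k : ℝ) + 1) ^ q := by
  simpa only [div_eq_mul_inv, add_comm _ (1 : ℝ)] using (summable_inv_add_pow one_pos hq).mul_left c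

lemma tsum_div_nat_succ_pow_le {c : ℝ} (hc : 0 ≤ c) {q : ℕ} (hq : 2 ≤ q) :
    ∑' k : ℕ, c / ((k : ℝ) + 1) ^ q ≤ 2 * c := by
  simp only [div_eq_mul_inv, add_comm _ (1 : ℝ)]
  rw [tsum_mul_left, mul_comm 2 c]
  exact mul_le_mul_of_nonneg_left (hurwitzSum_one_le_two hq) hc

lemma abs_sum_polygamma_le (m n : ℕ) :
    |∑ k ∈ Finset.range n, polygamma (m + 2) ((k : ℝ) + 1)| ≤
      ∑' k : ℕ, (((m + 1)! : ℝ) / ((k : ℝ) + 1) ^ (m + 2) +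
        ((m + 2)! : ℝ) / ((k : ℝ) + 1) ^ (m + 3)) :=
  (Finset.abs_sum_le_sum_abs _ _).trans <|
    (Finset.sum_le_sum fun k _ => abs_polygamma_le (m + 1) (by positivity)).trans <|
      Summable.sum_le_tsum _ (fun k _ => by positivity)
        ((summable_div_nat_succ_pow _ (by omega)).add (summable_div_nat_succ_pow _ (by omega)))

lemma tsum_polygamma_majorant_le (m : ℕ) :
    ∑' k : ℕ, (((m + 1)! : ℝ) / ((k : ℝ) + 1) ^ (m + 2) +
      ((m + 2)! : ℝ) / ((k : ℝ) + 1) ^ (m + 3)) ≤ 2 * (m + 1)! + 2 * (m + 2)! := by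
  rw [(summable_div_nat_succ_pow _ (by omega)).tsum_add (summable_div_nat_succ_pow _ (by omega))]
  exact add_le_add (tsum_div_nat_succ_pow_le (by positivity) (by omega))
    (tsum_div_nat_succ_pow_le (by positivity) (by omega))

lemma two_pow_sub_one_div_two_pow_mem_Icc (k : ℕ) : ((2 : ℝ) ^ k - 1) / 2 ^ k ∈ Icc 0 1 := by
  have h1 : (1 : ℝ) ≤ 2 ^ k := one_le_pow₀ (by norm_num)
  constructor
  · exact div_nonneg (by linarith) (by positivity)
  · rw [div_le_one (by positivity)]
    linarith

lemma two_add_two_mul_factorial_add_le (m : ℕ) :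
    2 + (2 * (m + 1)! + 2 * (m + 2)!) ≤ ((m + 3)! : ℝ) * (2 * π ^ 2 / 3) := by
  have hπ : (6 : ℝ) ≤ 2 * π ^ 2 / 3 := by nlinarith [pi_gt_three]
  have hfac₀ : (1 : ℝ) ≤ (m + 1)! := by exact_mod_cast Nat.factorial_pos _
  have hfac₁ : ((m + 1)! : ℝ) ≤ (m + 2)! := by exact_mod_cast Nat.factorial_le (by omega)
  have hfac₂ : ((m + 2)! : ℝ) ≤ (m + 3)! := by exact_mod_cast Nat.factorial_le (by omega)
  calc 2 + (2 * (m + 1)! + 2 * (m + 2)!) ≤ ((m + 3)! : ℝ) * 6 := by linarith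
    _ ≤ ((m + 3)! : ℝ) * (2 * π ^ 2 / 3) := by gcongr

theorem circular_ensemble_cumulants_general {Ω : Type*} [MeasurableSpace Ω]
    (μ : Measure Ω) [IsProbabilityMeasure μ] (X : Ω → ℝ)
    (n : ℕ) (β : ℝ) (hβ : β = 1 ∨ β = 2 ∨ β = 4)
    (ε : ℝ) (hε : 0 < ε)
    (hmellin : ∀ s : ℝ, |s| < ε →
      cgf X μ s =
        ∑ k ∈ Finset.range n,
          (Real.log (Real.Gamma (1 + k * β / 2)) + Real.log (Real.Gamma (1 + s + k * β / 2)) -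
            2 * Real.log (Real.Gamma (1 + s / 2 + k * β / 2)))) :
    (∀ j : ℕ, 2 ≤ j →
      cumulant X μ j =
        (((2 : ℝ) ^ (j - 1) - 1) / 2 ^ (j - 1)) *
          ∑ k ∈ Finset.range n, polygamma (j - 1) (1 + k * β / 2)) ∧
    (β = 2 → ∀ j : ℕ, 3 ≤ j →
      |cumulant X μ j| ≤
          (((2 : ℝ) ^ (j - 1) - 1) / 2 ^ (j - 1)) *
            (2 + ∑' k : ℕ, (((j - 2).factorial : ℝ) / ((k : ℝ) + 1) ^ (j - 1) +
              ((j - 1).factorial : ℝ) / ((k : ℝ) + 1) ^ j)) ∧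
        (((2 : ℝ) ^ (j - 1) - 1) / 2 ^ (j - 1)) *
            (2 + ∑' k : ℕ, (((j - 2).factorial : ℝ) / ((k : ℝ) + 1) ^ (j - 1) +
              ((j - 1).factorial : ℝ) / ((k : ℝ) + 1) ^ j)) ≤
          (j.factorial : ℝ) * (2 * Real.pi ^ 2 / 3)) := by
  have hβ0 : 0 ≤ β := by rcases hβ with rfl | rfl | rfl <;> norm_num
  have hcgf : (fun t => cgf X μ t) =ᶠ[𝓝 0] logCircularMoment n β :=
    eventually_of_mem (Metric.ball_mem_nhds 0 hε) fun s hs => hmellin s (by simpa using hs)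
  have hcumulant : ∀ j, j ≠ 0 → cumulant X μ j = ((2 : ℝ) ^ (j - 1) - 1) / 2 ^ (j - 1) *
      ∑ k ∈ Finset.range n, polygamma (j - 1) (1 + k * β / 2) := fun j hj =>
    (hcgf.iteratedDeriv_eq j).trans (iteratedDeriv_logCircularMoment n hβ0 hj)
  refine ⟨fun j hj => hcumulant j (by omega), ?_⟩
  rintro rfl j hj
  obtain ⟨m, rfl⟩ := Nat.exists_eq_add_of_le' hj
  rw [hcumulant _ (by omega)]
  simp only [show m + 3 - 1 = m + 2 from rfl, show m + 3 - 2 = m + 1 from rfl,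
    show ∀ k : ℕ, (1 + k * 2 / 2 : ℝ) = k + 1 from fun k => by ring]
  obtain ⟨hc0, hc1⟩ := two_pow_sub_one_div_two_pow_mem_Icc (m + 2)
  refine ⟨?_, ?_⟩
  · rw [abs_mul, abs_of_nonneg hc0]
    gcongr
    exact (abs_sum_polygamma_le m n).trans (le_add_of_nonneg_left zero_le_two)
  · calc _ ≤ 1 * (2 + (2 * (m + 1)! + 2 * (m + 2)! : ℝ)) := by
          gcongr
          exact tsum_polygamma_majorant_le m
      _ ≤ _ := (one_mul _).trans_le (two_add_two_mul_factorial_add_le m)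

theorem circular_ensemble_cumulants {Ω : Type*} [MeasurableSpace Ω]
    (μ : Measure Ω) [IsProbabilityMeasure μ] (X : Ω → ℝ)
    (n : ℕ) (hn : 1 ≤ n) (β : ℝ) (hβ : β = 1 ∨ β = 2 ∨ β = 4)
    (ε : ℝ) (hε : 0 < ε)
    (hmellin : ∀ s : ℝ, |s| < ε →
      cgf X μ s =
        ∑ k ∈ Finset.range n,
          (Real.log (Real.Gamma (1 + k * β / 2)) + Real.log (Real.Gamma (1 + s + k * β / 2)) -
            2 * Real.log (Real.Gamma (1 + s / 2 + k * β / 2)))) :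
    (∀ j : ℕ, 2 ≤ j →
      cumulant X μ j =
        (((2 : ℝ) ^ (j - 1) - 1) / 2 ^ (j - 1)) *
          ∑ k ∈ Finset.range n, polygamma (j - 1) (1 + k * β / 2)) ∧
    (β = 2 → ∀ j : ℕ, 3 ≤ j →
      |cumulant X μ j| ≤
          (((2 : ℝ) ^ (j - 1) - 1) / 2 ^ (j - 1)) *
            (2 + ∑' k : ℕ, (((j - 2).factorial : ℝ) / ((k : ℝ) + 1) ^ (j - 1) +
              ((j - 1).factorial : ℝ) / ((k : ℝ) + 1) ^ j)) ∧
        (((2 : ℝ) ^ (j - 1) - 1) / 2 ^ (j - 1)) *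
            (2 + ∑' k : ℕ, (((j - 2).factorial : ℝ) / ((k : ℝ) + 1) ^ (j - 1) +
              ((j - 1).factorial : ℝ) / ((k : ℝ) + 1) ^ j)) ≤
          (j.factorial : ℝ) * (2 * Real.pi ^ 2 / 3)) :=
  circular_ensemble_cumulants_general μ X n β hβ ε hε hmellin
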